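/- arXiv:2011.00471 — 3 statements merged into one kernel-verified Lean document; each statement's English description precedes it below -/
import Mathlib

section
/- Let Y_k, Z_k be square matrices of the same size and T, S matrices such that I - Y_kZ_k is invertible and M := I - Y_kZ_k - γ² T (I - Z_kY_k)⁻¹ S is invertible (where I - Z_kY_k is invertible and γ is a scalar). Define Y_{k+1} = [[0, Y_k],[Y_k, γT]] and Z_{k+1} = [[0, Z_k],[Z_k, γS]] in 2×2 block form. Then I - Y_{k+1}Z_{k+1} is invertible and its inverse equals the block product [[ (I-Y_kZ_k)⁻¹, γ(I-Y_kZ_k)⁻¹ Y_k S M⁻¹ ], [0, M⁻¹]] · [[I, 0],[γ T Z_k (I-Y_kZ_k)⁻¹, I]]. -/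
open Matrix

theorem stmt4 {r : ℕ} (Y Z T S : Matrix (Fin r) (Fin r) ℝ) (γ : ℝ)
    (h1 : IsUnit (1 - Y * Z)) (h2 : IsUnit (1 - Z * Y))
    (M : Matrix (Fin r) (Fin r) ℝ)
    (hM : M = 1 - Y * Z - (γ ^ 2) • (T * (1 - Z * Y)⁻¹ * S))
    (hMu : IsUnit M)
    (Y' Z' : Matrix (Fin r ⊕ Fin r) (Fin r ⊕ Fin r) ℝ)
    (hY' : Y' = Matrix.fromBlocks 0 Y Y (γ • T))
    (hZ' : Z' = Matrix.fromBlocks 0 Z Z (γ • S)) :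
    IsUnit (1 - Y' * Z') ∧
    (1 - Y' * Z')⁻¹ =
      Matrix.fromBlocks ((1 - Y * Z)⁻¹) (γ • ((1 - Y * Z)⁻¹ * Y * S * M⁻¹)) 0 M⁻¹ *
        Matrix.fromBlocks 1 0 (γ • (T * Z * (1 - Y * Z)⁻¹)) 1 := by
  have hd1 : IsUnit (1 - Y * Z).det := (Matrix.isUnit_iff_isUnit_det _).mp h1
  have hd2 : IsUnit (1 - Z * Y).det := (Matrix.isUnit_iff_isUnit_det _).mp h2
  set P := (1 - Y * Z)⁻¹ with hPdef
  set N := (1 - Z * Y)⁻¹ with hNdef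
  have hP1 : (1 - Y * Z) * P = 1 := Matrix.mul_nonsing_inv _ hd1
  have hN2 : N * (1 - Z * Y) = 1 := Matrix.nonsing_inv_mul _ hd2
  have hZP : Z * P = N * Z := by
    have h : (1 - Z * Y) * (Z * P) = Z := by
      have e : (1 - Z * Y) * (Z * P) = Z * ((1 - Y * Z) * P) := by noncomm_ring
      rw [e, hP1, Matrix.mul_one]
    calc Z * P = (N * (1 - Z * Y)) * (Z * P) := by rw [hN2, Matrix.one_mul]
      _ = N * ((1 - Z * Y) * (Z * P)) := Matrix.mul_assoc _ _ _
      _ = N * Z := by rw [h]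
  have hNZY : N * (Z * Y) = N - 1 := by
    have := hN2
    rw [Matrix.mul_sub, Matrix.mul_one] at this
    rw [eq_sub_iff_add_eq, ← this]; abel
  have hTS : T * Z * P * (Y * S) = T * N * S - T * S := by
    have e1 : T * Z * P * (Y * S) = T * (N * (Z * Y)) * S := by
      rw [Matrix.mul_assoc T Z P, hZP]; noncomm_ring
    rw [e1, hNZY]; noncomm_ring
  have hSchur : (1 - Y * Z - (γ ^ 2) • (T * S)) - -(γ • (T * Z)) * P * -(γ • (Y * S)) = M := by
    rw [hM]
    have e : -(γ • (T * Z)) * P * -(γ • (Y * S)) = (γ ^ 2) • (T * Z * P * (Y * S)) := by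
      rw [Matrix.neg_mul, neg_mul_neg, smul_mul_assoc, smul_mul_assoc, mul_smul_comm,
        smul_smul, ← pow_two]
    rw [e, hTS, smul_sub]
    abel
  have hA : (1 : Matrix (Fin r ⊕ Fin r) (Fin r ⊕ Fin r) ℝ) - Y' * Z' =
      Matrix.fromBlocks (1 - Y * Z) (-(γ • (Y * S))) (-(γ • (T * Z)))
        (1 - Y * Z - (γ ^ 2) • (T * S)) := by
    subst hY' hZ'
    rw [Matrix.fromBlocks_multiply, sub_eq_add_neg, ← Matrix.fromBlocks_one,
      Matrix.fromBlocks_neg, Matrix.fromBlocks_add]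
    rw [Matrix.fromBlocks_inj]
    refine ⟨?_, ?_, ?_, ?_⟩ <;>
      simp [smul_mul_assoc, mul_smul_comm, smul_smul, ← pow_two] <;> abel
  letI iA11 : Invertible (1 - Y * Z) := h1.invertible
  have hPeq : ⅟(1 - Y * Z) = P := Matrix.invOf_eq_nonsing_inv _
  letI iSchur : Invertible ((1 - Y * Z - (γ ^ 2) • (T * S)) -
      -(γ • (T * Z)) * ⅟(1 - Y * Z) * -(γ • (Y * S))) := by
    rw [hPeq, hSchur]; exact hMu.invertible
  letI iBig : Invertible (Matrix.fromBlocks (1 - Y * Z) (-(γ • (Y * S))) (-(γ • (T * Z)))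
      (1 - Y * Z - (γ ^ 2) • (T * S))) := Matrix.fromBlocks₁₁Invertible _ _ _ _
  have hQ : ⅟((1 - Y * Z - (γ ^ 2) • (T * S)) -
      -(γ • (T * Z)) * ⅟(1 - Y * Z) * -(γ • (Y * S))) = M⁻¹ := by
    rw [Matrix.invOf_eq_nonsing_inv]
    congr 1
    rw [hPeq, hSchur]
  constructor
  · rw [hA]; exact isUnit_of_invertible _
  · rw [hA, ← Matrix.invOf_eq_nonsing_inv, Matrix.invOf_fromBlocks₁₁_eq, hQ, hPeq,
      Matrix.fromBlocks_multiply]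
    rw [Matrix.fromBlocks_inj]
    refine ⟨?_, ?_, ?_, ?_⟩ <;>
      simp [smul_mul_assoc, mul_smul_comm, smul_smul, ← pow_two, Matrix.mul_assoc]
end

section
/- With the block recursion Y_{k+1} = [[0, Y_k],[Y_k, γT_k]], Z_{k+1} = [[0, Z_k],[Z_k, γS_k]] where Y_k, Z_k, T_k, S_k ≥ 0 entrywise, γ > 0, (I - Y_kZ_k)⁻¹ ≥ 0, (I - Z_kY_k)⁻¹ ≥ 0 entrywise, and additionally M := I - Y_kZ_k - γ² T_k(I - Z_kY_k)⁻¹S_k is invertible with M⁻¹ ≥ 0 entrywise, the matrix I - Y_{k+1}Z_{k+1} is invertible with entrywise nonnegative inverse; hence it is a nonsingular M-matrix. -/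
/-!
Write `A = 1 - YZ`. The matrix `1 - Y'Z'` is the block matrix
`[[A, -γYS], [-γTZ, A - γ²TS]]`, whose off-diagonal blocks are entrywise nonpositive. By the
push-through identity `(1 - ZY)⁻¹ = 1 + Z A⁻¹ Y`, the Schur complement of `A` in it is exactly `M`.
The Schur-complement formula for the inverse of a block matrix then expresses every block of
`(1 - Y'Z')⁻¹` as a sum of products of `A⁻¹`, `M⁻¹` and the negated off-diagonal blocks, all of
which are entrywise nonnegative.
-/

open Matrix

namespace Matrix

variable {l m n α : Type*}

theorem mul_apply_nonneg [Fintype m] [Semiring α] [PartialOrder α] [IsOrderedRing α]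
    {P : Matrix l m α} {Q : Matrix m n α}
    (hP : ∀ i j, 0 ≤ P i j) (hQ : ∀ i j, 0 ≤ Q i j) (i : l) (j : n) : 0 ≤ (P * Q) i j :=
  Finset.sum_nonneg fun k _ => mul_nonneg (hP i k) (hQ k j)

variable [Fintype m] [Fintype n] [DecidableEq m] [DecidableEq n] [CommRing α]

theorem inv_one_sub_mul_comm {Y : Matrix m n α} {Z : Matrix n m α} (h : IsUnit (1 - Y * Z)) :
    (1 - Z * Y)⁻¹ = 1 + Z * (1 - Y * Z)⁻¹ * Y := by
  apply inv_eq_right_inv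
  have hinv : (1 - Y * Z) * (1 - Y * Z)⁻¹ = 1 := mul_nonsing_inv _ ((isUnit_iff_isUnit_det _).mp h)
  calc (1 - Z * Y) * (1 + Z * (1 - Y * Z)⁻¹ * Y)
      = 1 - Z * Y + Z * ((1 - Y * Z) * (1 - Y * Z)⁻¹) * Y := by
        simp only [Matrix.sub_mul, Matrix.mul_sub, Matrix.mul_add, Matrix.one_mul, Matrix.mul_one,
          Matrix.mul_assoc]
    _ = 1 := by rw [hinv, Matrix.mul_one, sub_add_cancel]

theorem isUnit_fromBlocks_and_inv_eq {A : Matrix m m α} {B : Matrix m n α} {C : Matrix n m α}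
    {D : Matrix n n α} (hA : IsUnit A) (hS : IsUnit (D - C * A⁻¹ * B)) :
    IsUnit (fromBlocks A B C D) ∧
      (fromBlocks A B C D)⁻¹ =
        fromBlocks (A⁻¹ + A⁻¹ * B * (D - C * A⁻¹ * B)⁻¹ * C * A⁻¹)
          (-(A⁻¹ * B * (D - C * A⁻¹ * B)⁻¹)) (-((D - C * A⁻¹ * B)⁻¹ * C * A⁻¹))
          (D - C * A⁻¹ * B)⁻¹ := by
  let := hA.invertible
  have hS' : IsUnit (D - C * ⅟A * B) := by rwa [invOf_eq_nonsing_inv]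
  let := hS'.invertible
  let := fromBlocks₁₁Invertible A B C D
  refine ⟨isUnit_of_invertible _, ?_⟩
  rw [← invOf_eq_nonsing_inv, invOf_fromBlocks₁₁_eq]
  simp only [invOf_eq_nonsing_inv]

theorem inv_fromBlocks_nonneg [PartialOrder α] [IsOrderedRing α] {A : Matrix m m α}
    {B : Matrix m n α} {C : Matrix n m α} {D : Matrix n n α}
    (hA : IsUnit A) (hS : IsUnit (D - C * A⁻¹ * B))
    (hAn : ∀ i j, 0 ≤ A⁻¹ i j) (hSn : ∀ i j, 0 ≤ (D - C * A⁻¹ * B)⁻¹ i j)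
    (hB : ∀ i j, B i j ≤ 0) (hC : ∀ i j, C i j ≤ 0) :
    ∀ i j, 0 ≤ (fromBlocks A B C D)⁻¹ i j := by
  rw [(isUnit_fromBlocks_and_inv_eq hA hS).2]
  set S := D - C * A⁻¹ * B
  have hBn : ∀ i j, 0 ≤ (-B) i j := fun i j => neg_nonneg.mpr (hB i j)
  have hCn : ∀ i j, 0 ≤ (-C) i j := fun i j => neg_nonneg.mpr (hC i j)
  have h₁₂ : -(A⁻¹ * B * S⁻¹) = A⁻¹ * (-B) * S⁻¹ := by
    rw [Matrix.mul_neg, Matrix.neg_mul]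
  have h₂₁ : -(S⁻¹ * C * A⁻¹) = S⁻¹ * (-C) * A⁻¹ := by
    rw [Matrix.mul_neg, Matrix.neg_mul]
  have h₁₁ : A⁻¹ * B * S⁻¹ * C * A⁻¹ = A⁻¹ * (-B) * S⁻¹ * (-C) * A⁻¹ := by
    simp only [Matrix.mul_neg, Matrix.neg_mul, neg_neg]
  rintro (i | i) (j | j)
  · rw [fromBlocks_apply₁₁, h₁₁, add_apply]
    exact add_nonneg (hAn i j) (mul_apply_nonneg (mul_apply_nonneg (mul_apply_nonneg
      (mul_apply_nonneg hAn hBn) hSn) hCn) hAn i j)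
  · rw [fromBlocks_apply₁₂, h₁₂]
    exact mul_apply_nonneg (mul_apply_nonneg hAn hBn) hSn i j
  · rw [fromBlocks_apply₂₁, h₂₁]
    exact mul_apply_nonneg (mul_apply_nonneg hSn hCn) hAn i j
  · exact hSn i j

end Matrix

section BlockRecursion

variable {n α : Type*} [Fintype n] [DecidableEq n] [CommRing α]

theorem one_sub_fromBlocks_mul_fromBlocks (Y Z T S : Matrix n n α) (γ : α) :
    1 - fromBlocks 0 Y Y (γ • T) * fromBlocks 0 Z Z (γ • S) =
      fromBlocks (1 - Y * Z) (-(γ • (Y * S))) (-(γ • (T * Z))) (1 - Y * Z - γ ^ 2 • (T * S)) := by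
  rw [fromBlocks_multiply, ← fromBlocks_one, sub_eq_add_neg, fromBlocks_neg, fromBlocks_add]
  congr 1 <;> simp only [Matrix.zero_mul, Matrix.mul_zero, Matrix.mul_smul, Matrix.smul_mul] <;>
    module

theorem schur_complement_one_sub_fromBlocks_mul {Y Z : Matrix n n α} (T S : Matrix n n α) (γ : α)
    (h : IsUnit (1 - Y * Z)) :
    1 - Y * Z - γ ^ 2 • (T * S) - -(γ • (T * Z)) * (1 - Y * Z)⁻¹ * -(γ • (Y * S)) =
      1 - Y * Z - γ ^ 2 • (T * (1 - Z * Y)⁻¹ * S) := by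
  rw [inv_one_sub_mul_comm h]
  simp only [Matrix.neg_mul, Matrix.mul_neg, Matrix.smul_mul, Matrix.mul_smul,
    Matrix.mul_add, Matrix.add_mul, Matrix.mul_one, Matrix.mul_assoc]
  module

end BlockRecursion

theorem stmt5_general {r : ℕ} (Y Z T S : Matrix (Fin r) (Fin r) ℝ) (γ : ℝ) (hγ : 0 < γ)
    (hY : ∀ i j, 0 ≤ Y i j) (hZ : ∀ i j, 0 ≤ Z i j)
    (hT : ∀ i j, 0 ≤ T i j) (hS : ∀ i j, 0 ≤ S i j)
    (h1 : IsUnit (1 - Y * Z))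
    (h1n : ∀ i j, 0 ≤ (1 - Y * Z)⁻¹ i j)
    (M : Matrix (Fin r) (Fin r) ℝ)
    (hM : M = 1 - Y * Z - (γ ^ 2) • (T * (1 - Z * Y)⁻¹ * S))
    (hMu : IsUnit M) (hMn : ∀ i j, 0 ≤ M⁻¹ i j)
    (Y' Z' : Matrix (Fin r ⊕ Fin r) (Fin r ⊕ Fin r) ℝ)
    (hY' : Y' = Matrix.fromBlocks 0 Y Y (γ • T))
    (hZ' : Z' = Matrix.fromBlocks 0 Z Z (γ • S)) :
    IsUnit (1 - Y' * Z') ∧ (∀ i j, 0 ≤ (1 - Y' * Z')⁻¹ i j) := by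
  rw [hM, ← schur_complement_one_sub_fromBlocks_mul T S γ h1] at hMu hMn
  have hoffDiag_nonpos : ∀ {P Q : Matrix (Fin r) (Fin r) ℝ},
      (∀ i j, 0 ≤ P i j) → (∀ i j, 0 ≤ Q i j) → ∀ i j, (-(γ • (P * Q))) i j ≤ 0 := fun hP hQ i j =>
    neg_nonpos.mpr (mul_nonneg hγ.le (mul_apply_nonneg hP hQ i j))
  rw [hY', hZ', one_sub_fromBlocks_mul_fromBlocks]
  exact ⟨(isUnit_fromBlocks_and_inv_eq h1 hMu).1,
    inv_fromBlocks_nonneg h1 hMu h1n hMn (hoffDiag_nonpos hY hS) (hoffDiag_nonpos hT hZ)⟩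

theorem stmt5 {r : ℕ} (Y Z T S : Matrix (Fin r) (Fin r) ℝ) (γ : ℝ) (hγ : 0 < γ)
    (hY : ∀ i j, 0 ≤ Y i j) (hZ : ∀ i j, 0 ≤ Z i j)
    (hT : ∀ i j, 0 ≤ T i j) (hS : ∀ i j, 0 ≤ S i j)
    (h1 : IsUnit (1 - Y * Z)) (h2 : IsUnit (1 - Z * Y))
    (h1n : ∀ i j, 0 ≤ (1 - Y * Z)⁻¹ i j) (h2n : ∀ i j, 0 ≤ (1 - Z * Y)⁻¹ i j)
    (M : Matrix (Fin r) (Fin r) ℝ)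
    (hM : M = 1 - Y * Z - (γ ^ 2) • (T * (1 - Z * Y)⁻¹ * S))
    (hMu : IsUnit M) (hMn : ∀ i j, 0 ≤ M⁻¹ i j)
    (Y' Z' : Matrix (Fin r ⊕ Fin r) (Fin r ⊕ Fin r) ℝ)
    (hY' : Y' = Matrix.fromBlocks 0 Y Y (γ • T))
    (hZ' : Z' = Matrix.fromBlocks 0 Z Z (γ • S)) :
    IsUnit (1 - Y' * Z') ∧ (∀ i j, 0 ≤ (1 - Y' * Z')⁻¹ i j) :=
  stmt5_general Y Z T S γ hγ hY hZ hT hS h1 h1n M hM hMu hMn Y' Z' hY' hZ'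
end

section
/- Triplet representation of the initial kernels: with Y₀ = αB_rᵀD_α⁻¹C_l, Z₀ = βC_rᵀA_β⁻¹B_l, Q₀ = D_α⁻ᵀB_r, V₀ = A_β⁻ᵀC_r, and under the identities γD_α⁻¹Cu₂ + γD_α⁻¹v₁ = u₁ - D_α⁻¹D_{-β}u₁ and γA_β⁻¹Bu₁ + γA_β⁻¹v₂ = u₂ - A_β⁻¹A_{-α}u₂ with C = C_lC_rᵀ, B = B_lB_rᵀ, it holds that (I - Y₀Z₀)B_rᵀu₁ = (Q₀ᵀu₁ + αQ₀ᵀv₁) + Y₀(V₀ᵀu₂ + βV₀ᵀv₂) and (I - Z₀Y₀)C_rᵀu₂ = (V₀ᵀu₂ + βV₀ᵀv₂) + Z₀(Q₀ᵀu₁ + αQ₀ᵀv₁). -/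
open Matrix

theorem stmt11 {n m p q : ℕ}
    (D : Matrix (Fin n) (Fin n) ℝ) (A : Matrix (Fin m) (Fin m) ℝ)
    (Bl : Matrix (Fin m) (Fin p) ℝ) (Br : Matrix (Fin n) (Fin p) ℝ)
    (Cl : Matrix (Fin n) (Fin q) ℝ) (Cr : Matrix (Fin m) (Fin q) ℝ)
    (B : Matrix (Fin m) (Fin n) ℝ) (C : Matrix (Fin n) (Fin m) ℝ)
    (hB : B = Bl * Brᵀ) (hC : C = Cl * Crᵀ)
    (α β γ : ℝ) (hγ : γ = α + β) (hγpos : 0 < γ)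
    (hD : IsUnit (α • D + 1)) (hA : IsUnit (β • A + 1))
    (u₁ : Fin n → ℝ) (u₂ : Fin m → ℝ) (v₁ : Fin n → ℝ) (v₂ : Fin m → ℝ)
    (hDu : D.mulVec u₁ = v₁ + C.mulVec u₂)
    (hAu : A.mulVec u₂ = v₂ + B.mulVec u₁)
    (Y₀ : Matrix (Fin p) (Fin q) ℝ) (Z₀ : Matrix (Fin q) (Fin p) ℝ)
    (Q₀ : Matrix (Fin n) (Fin p) ℝ) (V₀ : Matrix (Fin m) (Fin q) ℝ)
    (hY₀ : Y₀ = α • (Brᵀ * (α • D + 1)⁻¹ * Cl))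
    (hZ₀ : Z₀ = β • (Crᵀ * (β • A + 1)⁻¹ * Bl))
    (hQ₀ : Q₀ = ((α • D + 1)⁻¹)ᵀ * Br)
    (hV₀ : V₀ = ((β • A + 1)⁻¹)ᵀ * Cr) :
    (1 - Y₀ * Z₀).mulVec (Brᵀ.mulVec u₁) =
      (Q₀ᵀ.mulVec u₁ + α • Q₀ᵀ.mulVec v₁) +
        Y₀.mulVec (V₀ᵀ.mulVec u₂ + β • V₀ᵀ.mulVec v₂) ∧
    (1 - Z₀ * Y₀).mulVec (Crᵀ.mulVec u₂) =
      (V₀ᵀ.mulVec u₂ + β • V₀ᵀ.mulVec v₂) +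
        Z₀.mulVec (Q₀ᵀ.mulVec u₁ + α • Q₀ᵀ.mulVec v₁) := by

  have hDdet : IsUnit (α • D + 1).det := (Matrix.isUnit_iff_isUnit_det _).mp hD
  have hAdet : IsUnit (β • A + 1).det := (Matrix.isUnit_iff_isUnit_det _).mp hA
  set E := α • D + 1 with hE
  set F := β • A + 1 with hF
  have hEinv : E⁻¹ * E = 1 := Matrix.nonsing_inv_mul E hDdet
  have hFinv : F⁻¹ * F = 1 := Matrix.nonsing_inv_mul F hAdet
  have hQT : Q₀ᵀ = Brᵀ * E⁻¹ := by
    rw [hQ₀, Matrix.transpose_mul, Matrix.transpose_transpose]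
  have hVT : V₀ᵀ = Crᵀ * F⁻¹ := by
    rw [hV₀, Matrix.transpose_mul, Matrix.transpose_transpose]
  have hEu : E.mulVec u₁ = (u₁ + α • v₁) + α • C.mulVec u₂ := by
    rw [hE, Matrix.add_mulVec, Matrix.smul_mulVec, hDu, Matrix.one_mulVec]
    module
  have hFu : F.mulVec u₂ = (u₂ + β • v₂) + β • B.mulVec u₁ := by
    rw [hF, Matrix.add_mulVec, Matrix.smul_mulVec, hAu, Matrix.one_mulVec]
    module
  have key1 : E⁻¹.mulVec (u₁ + α • v₁) = u₁ - α • (E⁻¹ * C).mulVec u₂ := by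
    have h : E⁻¹.mulVec (E.mulVec u₁) = u₁ := by
      rw [Matrix.mulVec_mulVec, hEinv, Matrix.one_mulVec]
    rw [hEu, Matrix.mulVec_add, Matrix.mulVec_smul, Matrix.mulVec_mulVec] at h
    linear_combination (norm := module) h
  have key2 : F⁻¹.mulVec (u₂ + β • v₂) = u₂ - β • (F⁻¹ * B).mulVec u₁ := by
    have h : F⁻¹.mulVec (F.mulVec u₂) = u₂ := by
      rw [Matrix.mulVec_mulVec, hFinv, Matrix.one_mulVec]
    rw [hFu, Matrix.mulVec_add, Matrix.mulVec_smul, Matrix.mulVec_mulVec] at h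
    linear_combination (norm := module) h
  have L1 : Q₀ᵀ.mulVec u₁ + α • Q₀ᵀ.mulVec v₁
      = Brᵀ.mulVec u₁ - Y₀.mulVec (Crᵀ.mulVec u₂) := by
    have h : Q₀ᵀ.mulVec u₁ + α • Q₀ᵀ.mulVec v₁ = Q₀ᵀ.mulVec (u₁ + α • v₁) := by
      rw [Matrix.mulVec_add, Matrix.mulVec_smul]
    rw [h, hQT, ← Matrix.mulVec_mulVec, key1, Matrix.mulVec_sub,
      Matrix.mulVec_smul, hY₀, Matrix.smul_mulVec, Matrix.mulVec_mulVec,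
      Matrix.mulVec_mulVec, Matrix.mul_assoc, Matrix.mul_assoc, ← hC,
      ← Matrix.mul_assoc]
  have L2 : V₀ᵀ.mulVec u₂ + β • V₀ᵀ.mulVec v₂
      = Crᵀ.mulVec u₂ - Z₀.mulVec (Brᵀ.mulVec u₁) := by
    have h : V₀ᵀ.mulVec u₂ + β • V₀ᵀ.mulVec v₂ = V₀ᵀ.mulVec (u₂ + β • v₂) := by
      rw [Matrix.mulVec_add, Matrix.mulVec_smul]
    rw [h, hVT, ← Matrix.mulVec_mulVec, key2, Matrix.mulVec_sub,
      Matrix.mulVec_smul, hZ₀, Matrix.smul_mulVec, Matrix.mulVec_mulVec,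
      Matrix.mulVec_mulVec, Matrix.mul_assoc, Matrix.mul_assoc, ← hB,
      ← Matrix.mul_assoc]
  constructor
  · rw [L1, L2, Matrix.sub_mulVec, Matrix.one_mulVec, ← Matrix.mulVec_mulVec,
      Matrix.mulVec_sub]
    abel
  · rw [L1, L2, Matrix.sub_mulVec, Matrix.one_mulVec, ← Matrix.mulVec_mulVec,
      Matrix.mulVec_sub]
    abel
end
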